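/- arXiv:2602.12230 — 3 statements merged into one kernel-verified Lean document; each statement's English description precedes it below -/
import Mathlib

section
/- Suppose w lies in the m-th Fourier mode, i.e., Vw = i m w, with V skew-adjoint and (η⁺)* = −η⁻, (η⁻)* = −η⁺, and [η⁻,η⁺] = (i/2) K V. Then ‖η⁺w‖² − ‖η⁻w‖² = (m/2) ∫ K |w|² dμ. In particular, if K ≤ −κ₀ < 0 and m > 0, then ‖η⁺w‖² ≤ ‖η⁻w‖² − (κ₀ m / 2) ‖w‖². -/
open scoped ComplexInnerProductSpace

/-- Guillemin–Kazhdan energy–curvature identity: if `Vw = imw` with `V`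
skew-adjoint, `(η⁺)* = −η⁻`, `(η⁻)* = −η⁺`, and `[η⁻,η⁺] = (i/2) K V`, then
`‖η⁺w‖² − ‖η⁻w‖² = (m/2)⟨w, Kw⟩ = (m/2)∫K|w|² dμ`; and if `K ≤ −κ₀ < 0` and
`m > 0`, the coercive estimate `‖η⁺w‖² ≤ ‖η⁻w‖² − (κ₀ m/2)‖w‖²` follows. -/
theorem stmt_10 {W : Type*} [NormedAddCommGroup W] [InnerProductSpace ℂ W]
    (ηp ηm V K : W →ₗ[ℂ] W)
    (hVskew : ∀ x y : W, ⟪V x, y⟫ = -⟪x, V y⟫)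
    (hadjp : ∀ x y : W, ⟪ηp x, y⟫ = -⟪x, ηm y⟫)
    (hadjm : ∀ x y : W, ⟪ηm x, y⟫ = -⟪x, ηp y⟫)
    (hKsymm : ∀ x y : W, ⟪K x, y⟫ = ⟪x, K y⟫)
    (hcomm : ∀ x : W, ηm (ηp x) - ηp (ηm x) = (Complex.I / 2) • K (V x))
    (m : ℤ) (w : W) (hw : V w = ((m : ℂ) * Complex.I) • w) :
    (‖ηp w‖ ^ 2 - ‖ηm w‖ ^ 2 = ((m : ℝ) / 2) * (⟪w, K w⟫).re)
    ∧ ∀ κ₀ : ℝ, 0 < κ₀ → (∀ x : W, (⟪x, K x⟫).re ≤ -κ₀ * ‖x‖ ^ 2) → 0 < m →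
        ‖ηp w‖ ^ 2 ≤ ‖ηm w‖ ^ 2 - (κ₀ * (m : ℝ) / 2) * ‖w‖ ^ 2 := by
  have key : (⟪ηp w, ηp w⟫ : ℂ) - ⟪ηm w, ηm w⟫ = ((m : ℂ) / 2) * ⟪w, K w⟫ := by
    rw [hadjp w (ηp w), hadjm w (ηm w)]
    have : -⟪w, ηm (ηp w)⟫ - -⟪w, ηp (ηm w)⟫ = -⟪w, ηm (ηp w) - ηp (ηm w)⟫ := by
      rw [inner_sub_right]; ring
    rw [this, hcomm w, hw, map_smul, inner_smul_right, inner_smul_right]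
    ring_nf
    rw [Complex.I_sq]
    ring
  have main : ‖ηp w‖ ^ 2 - ‖ηm w‖ ^ 2 = ((m : ℝ) / 2) * (⟪w, K w⟫).re := by
    have := congrArg Complex.re key
    simpa [inner_self_eq_norm_sq_to_K, ← Complex.ofReal_pow, Complex.sub_re,
      Complex.div_re, Complex.mul_re, Complex.normSq] using this
  refine ⟨main, fun κ₀ hκ hK hm => ?_⟩
  have hKw := hK w
  have hm' : (0 : ℝ) < (m : ℝ) := by exact_mod_cast hm
  nlinarith [main, sq_nonneg ‖w‖]
end

section
/- Suppose (u_m)_{m∈ℤ} are vectors in mutually orthogonal subspaces with u_m in mode m, satisfying the tail relations η⁺u_{m−1} + η⁻u_{m+1} = 0 for all |m| ≥ 3, the mode energy identity ‖η⁺u_m‖² − ‖η⁻u_m‖² ≥ (κ₀ m / 2)‖u_m‖² for m ≥ 3 (with κ₀ > 0), and ‖η⁻u_m‖ → 0 as m → ∞. If additionally ‖η⁻u_{m+1}‖ = ‖η⁺u_{m−1}‖ for all m ≥ 3, then the telescoping identity Σ_{m=3}^{M}(‖η⁺u_m‖² − ‖η⁻u_m‖²) = ‖η⁻u_{M+2}‖²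 + ‖η⁻u_{M+1}‖² − ‖η⁺u_1‖² − ‖η⁺u_2‖² holds for all M ≥ 3, and letting M → ∞ forces u_m = 0 for all m ≥ 3. -/
/-- The positive-tail vanishing argument in the Guillemin–Kazhdan ±1-mode
reduction, in abstract form: `a m = ‖η⁺u_m‖²`, `b m = ‖η⁻u_m‖²`,
`nrm m = ‖u_m‖²`. The tail relations give `a m − b m = b (m+2) − a (m−2)` and
`b (m+1) = a (m−1)` for `m ≥ 3`, the energy identity gives
`a m − b m ≥ (κ₀ m/2) nrm m`, and `b m → 0`. Then the telescoping identity holds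
and all `nrm m` (hence `u_m`) vanish for `m ≥ 3`. -/
theorem stmt_11 (a b nrm : ℕ → ℝ) (κ₀ : ℝ) (hκ : 0 < κ₀)
    (ha : ∀ m, 0 ≤ a m) (hb : ∀ m, 0 ≤ b m) (hn : ∀ m, 0 ≤ nrm m)
    (htail : ∀ m ≥ 3, a m - b m = b (m + 2) - a (m - 2))
    (henergy : ∀ m ≥ 3, (κ₀ * m / 2) * nrm m ≤ a m - b m)
    (hba : ∀ m ≥ 3, b (m + 1) = a (m - 1))
    (hb0 : Filter.Tendsto b Filter.atTop (nhds 0)) :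
    (∀ M ≥ 3, ∑ m ∈ Finset.Icc 3 M, (a m - b m)
        = b (M + 2) + b (M + 1) - a 1 - a 2)
    ∧ ∀ m ≥ 3, nrm m = 0 := by
  have hT : ∀ M ≥ 3, ∑ m ∈ Finset.Icc 3 M, (a m - b m)
      = b (M + 2) + b (M + 1) - a 1 - a 2 := by
    intro M hM
    induction M with
    | zero => omega
    | succ N ih =>
      rcases Nat.lt_or_ge N 3 with h | h
      · have hN : N = 2 := by omega
        subst hN
        have h3 := htail 3 (by norm_num)
        have h4 := hba 3 (by norm_num)
        norm_num at h3 h4 ⊢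
        linarith
      · rw [Finset.sum_Icc_succ_top (by omega : 3 ≤ N + 1)]
        have hih := ih h
        have h1 := htail (N + 1) (by omega)
        have h2 := hba N h
        have e1 : N + 1 - 2 = N - 1 := by omega
        rw [e1] at h1
        have e2 : N + 1 + 2 = N + 3 := by omega
        have e3 : N + 2 + 1 = N + 3 := by omega
        rw [e2] at h1
        rw [e3]
        linarith
  refine ⟨hT, ?_⟩
  intro m hm
  have hnonneg : ∀ k ≥ 3, (0:ℝ) ≤ a k - b k := by
    intro k hk
    refine le_trans ?_ (henergy k hk)
    have : (0:ℝ) ≤ κ₀ * k / 2 := by positivity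
    exact mul_nonneg this (hn k)
  have key : ∀ M ≥ m, (κ₀ * m / 2) * nrm m ≤ b (M + 2) + b (M + 1) - a 1 - a 2 := by
    intro M hM
    rw [← hT M (le_trans hm hM)]
    refine le_trans (henergy m hm) ?_
    exact Finset.single_le_sum (fun k hk => hnonneg k (Finset.mem_Icc.mp hk).1)
      (Finset.mem_Icc.mpr ⟨hm, hM⟩)
  have htend : Filter.Tendsto (fun M => b (M + 2) + b (M + 1) - a 1 - a 2)
      Filter.atTop (nhds (0 + 0 - a 1 - a 2)) := by
    exact (((hb0.comp (Filter.tendsto_add_atTop_nat 2)).add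
      (hb0.comp (Filter.tendsto_add_atTop_nat 1))).sub_const (a 1)).sub_const (a 2)
  have hle : (κ₀ * m / 2) * nrm m ≤ 0 + 0 - a 1 - a 2 :=
    ge_of_tendsto htend (Filter.eventually_atTop.mpr ⟨m, key⟩)
  have hm' : (3:ℝ) ≤ m := by exact_mod_cast hm
  have hpos : 0 < κ₀ * m / 2 := by nlinarith
  have h0 : (κ₀ * m / 2) * nrm m = 0 := by
    have := ha 1; have := ha 2
    nlinarith [mul_nonneg hpos.le (hn m)]
  nlinarith [hn m, h0, hpos]
end

section
/- Let Φ : [0,ε] × (ℝ/Lℤ) → T*X parametrize a cylinder of closed orbits, Φ(t,s) = y_t(s), with ∂_s Φ = H_t ∘ Φ where H_t is the Hamiltonian vector field of p_t, and suppose p_t ∘ Φ ≡ 1. Then Φ*ω = ṗ_t(Φ) dt ∧ ds, and by Stokes' theorem ∫_0^ε ∫_0^L ṗ_t(y_t(s)) ds dt = ∫_{y_ε} α − ∫_{y_0} α, where ω = dα is the canonical symplectic form. If moreover p_t is positively homogeneous of degree 1 in ξ so that α(H_t) = p_t, and all orbits have the same period L, then both action integrals equal L and ∫_{y_0} ṗ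 ds = 0. -/
open intervalIntegral
open scoped RealInnerProductSpace

noncomputable section

/-- The canonical 1-form `α` on `T*X ≅ E × E*`: `α_{(x,ξ)}(u,v) = ⟨ξ, u⟩`. -/
def alphaCan {n : ℕ}
    (z w : EuclideanSpace ℝ (Fin n) × EuclideanSpace ℝ (Fin n)) : ℝ :=
  ⟪z.2, w.1⟫

/-- The canonical symplectic form `ω = dα`:
`ω((u₁,v₁),(u₂,v₂)) = ⟨v₁,u₂⟩ − ⟨v₂,u₁⟩`. -/
def omegaCan {n : ℕ}
    (w₁ w₂ : EuclideanSpace ℝ (Fin n) × EuclideanSpace ℝ (Fin n)) : ℝ :=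
  ⟪w₁.2, w₂.1⟫ - ⟪w₂.2, w₁.1⟫

/-- The Guillemin–Kazhdan strip argument: let `Φ(t,s) = y_t(s)` parametrize a
cylinder of closed orbits of the Hamiltonian flows of `p_t` on `{p_t = 1}`, with
`∂_s Φ = H_t∘Φ` where `ι_{H_t}ω = dp_t`. Then `Φ*ω = ṗ_t(Φ) dt∧ds`; by Stokes,
`∫₀^ε∫₀^L ṗ_t(y_t(s)) ds dt = ∫_{y_ε}α − ∫_{y_0}α`; and if `p_t` is positively
homogeneous of degree 1 (so `α(H_t) = p_t`) and all orbits have the same period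
`L`, then `∫_{y_0} ṗ ds = 0`. -/
theorem stmt_19 {n : ℕ}
    (p pdot : ℝ → (EuclideanSpace ℝ (Fin n) × EuclideanSpace ℝ (Fin n)) → ℝ)
    (Ham : ℝ → (EuclideanSpace ℝ (Fin n) × EuclideanSpace ℝ (Fin n)) →
      (EuclideanSpace ℝ (Fin n) × EuclideanSpace ℝ (Fin n)))
    (Φ Φt Φs : ℝ → ℝ → (EuclideanSpace ℝ (Fin n) × EuclideanSpace ℝ (Fin n)))
    (L ε : ℝ) (hL : 0 < L) (hε : 0 < ε)
    (hp : ContDiff ℝ (⊤ : ℕ∞)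
      (fun q : ℝ × (EuclideanSpace ℝ (Fin n) × EuclideanSpace ℝ (Fin n)) =>
        p q.1 q.2))
    (hΦ : ContDiff ℝ (⊤ : ℕ∞) (fun q : ℝ × ℝ => Φ q.1 q.2))
    (hΦt : ∀ t s, HasDerivAt (fun t' => Φ t' s) (Φt t s) t)
    (hΦs : ∀ t s, HasDerivAt (fun s' => Φ t s') (Φs t s) s)
    -- `H_t` is the Hamiltonian vector field of `p_t`: `ι_{H_t}ω = dp_t`
    (hHam : ∀ t z w, omegaCan (Ham t z) w = fderiv ℝ (p t) z w)
    -- `∂_s Φ = H_t ∘ Φ`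
    (hflow : ∀ t s, Φs t s = Ham t (Φ t s))
    -- the orbits lie on the level set `{p_t = 1}`
    (hlevel : ∀ t s, p t (Φ t s) = 1)
    -- all orbits are closed with the same period `L`
    (hper : ∀ t s, Φ t (s + L) = Φ t s)
    -- `ṗ_t = ∂_t p_t`
    (hpdot : ∀ t z, HasDerivAt (fun t' => p t' z) (pdot t z) t)
    -- `p_t` is positively homogeneous of degree 1 in `ξ`
    (hhom : ∀ t (x ξ : EuclideanSpace ℝ (Fin n)) (c : ℝ), 0 < c →
      p t (x, c • ξ) = c * p t (x, ξ)) :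
    -- `Φ*ω = ṗ_t(Φ) dt∧ds`
    (∀ t s, omegaCan (Φt t s) (Φs t s) = pdot t (Φ t s))
    -- Stokes: the strip integral equals the difference of action integrals
    ∧ (∫ t in (0:ℝ)..ε, ∫ s in (0:ℝ)..L, pdot t (Φ t s))
        = (∫ s in (0:ℝ)..L, alphaCan (Φ ε s) (Φs ε s))
          - ∫ s in (0:ℝ)..L, alphaCan (Φ 0 s) (Φs 0 s)
    -- the Guillemin–Kazhdan identity
    ∧ (∫ s in (0:ℝ)..L, pdot 0 (Φ 0 s)) = 0 := by
  have hFd : Differentiable ℝ (fun q : ℝ × ℝ => Φ q.1 q.2) := hΦ.differentiable (by simp)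
  have hPd : Differentiable ℝ (fun q : ℝ ×
      (EuclideanSpace ℝ (Fin n) × EuclideanSpace ℝ (Fin n)) => p q.1 q.2) :=
    hp.differentiable (by simp)
  have hcurve_t : ∀ t s : ℝ, HasDerivAt (fun t' : ℝ => (t', s)) ((1:ℝ), (0:ℝ)) t :=
    fun t s => (hasDerivAt_id t).prodMk (hasDerivAt_const t s)
  have hcurve_s : ∀ t s : ℝ, HasDerivAt (fun s' : ℝ => (t, s')) ((0:ℝ), (1:ℝ)) s :=
    fun t s => (hasDerivAt_const s t).prodMk (hasDerivAt_id s)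
  have hFt : ∀ t s, Φt t s = fderiv ℝ (fun q : ℝ × ℝ => Φ q.1 q.2) (t,s) (1,0) := fun t s =>
    (hΦt t s).unique ((hFd (t,s)).hasFDerivAt.comp_hasDerivAt (l := fun q : ℝ × ℝ => Φ q.1 q.2) t (hcurve_t t s))
  have hFs : ∀ t s, Φs t s = fderiv ℝ (fun q : ℝ × ℝ => Φ q.1 q.2) (t,s) (0,1) := fun t s =>
    (hΦs t s).unique ((hFd (t,s)).hasFDerivAt.comp_hasDerivAt s (hcurve_s t s))
  -- second derivative
  have hF1C : ContDiff ℝ 1 (fderiv ℝ (fun q : ℝ × ℝ => Φ q.1 q.2)) :=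
    (hΦ.of_le (WithTop.coe_le_coe.mpr le_top) : ContDiff ℝ 2 _).fderiv_right (by norm_num)
  have hsymm : ∀ t s : ℝ, fderiv ℝ (fderiv ℝ (fun q : ℝ × ℝ => Φ q.1 q.2)) (t,s)
        ((0:ℝ),(1:ℝ)) ((1:ℝ),(0:ℝ))
      = fderiv ℝ (fderiv ℝ (fun q : ℝ × ℝ => Φ q.1 q.2)) (t,s)
        ((1:ℝ),(0:ℝ)) ((0:ℝ),(1:ℝ)) := fun t s =>
    ((hΦ.of_le (WithTop.coe_le_coe.mpr le_top) : ContDiff ℝ 2 _).contDiffAt.isSymmSndFDerivAt (by simp [minSmoothness_of_isRCLikeNormedField])) _ _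
  have hΦsDt : ∀ t s, HasDerivAt (fun t' => Φs t' s)
      (fderiv ℝ (fderiv ℝ (fun q : ℝ × ℝ => Φ q.1 q.2)) (t,s) ((1:ℝ),(0:ℝ)) ((0:ℝ),(1:ℝ))) t := by
    intro t s
    have h2 : HasDerivAt (fun t' : ℝ => fderiv ℝ (fun q : ℝ × ℝ => Φ q.1 q.2) (t', s))
        (fderiv ℝ (fderiv ℝ (fun q : ℝ × ℝ => Φ q.1 q.2)) (t,s) ((1:ℝ),(0:ℝ))) t :=
      (hF1C.differentiable one_ne_zero (t,s)).hasFDerivAt.comp_hasDerivAt t (hcurve_t t s)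
    have h3 := h2.clm_apply (hasDerivAt_const t ((0:ℝ),(1:ℝ)))
    simp only [map_zero, add_zero] at h3
    have he : (fun t' => Φs t' s)
        = fun t' : ℝ => fderiv ℝ (fun q : ℝ × ℝ => Φ q.1 q.2) (t', s) ((0:ℝ),(1:ℝ)) :=
      funext fun t' => hFs t' s
    rw [he]
    exact h3
  have hΦtDs : ∀ t s, HasDerivAt (fun s' => Φt t s')
      (fderiv ℝ (fderiv ℝ (fun q : ℝ × ℝ => Φ q.1 q.2)) (t,s) ((1:ℝ),(0:ℝ)) ((0:ℝ),(1:ℝ))) s := by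
    intro t s
    have h2 : HasDerivAt (fun s' : ℝ => fderiv ℝ (fun q : ℝ × ℝ => Φ q.1 q.2) (t, s'))
        (fderiv ℝ (fderiv ℝ (fun q : ℝ × ℝ => Φ q.1 q.2)) (t,s) ((0:ℝ),(1:ℝ))) s :=
      (hF1C.differentiable one_ne_zero (t,s)).hasFDerivAt.comp_hasDerivAt s (hcurve_s t s)
    have h3 := h2.clm_apply (hasDerivAt_const s ((1:ℝ),(0:ℝ)))
    simp only [map_zero, add_zero] at h3
    have he : (fun s' => Φt t s')
        = fun s' : ℝ => fderiv ℝ (fun q : ℝ × ℝ => Φ q.1 q.2) (t, s') ((1:ℝ),(0:ℝ)) :=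
      funext fun s' => hFt t s'
    rw [he, ← hsymm t s]
    exact h3
  -- p t is differentiable
  have hptd : ∀ t : ℝ, Differentiable ℝ (p t) := by
    intro t
    have : ContDiff ℝ 1 (fun z : EuclideanSpace ℝ (Fin n) × EuclideanSpace ℝ (Fin n) =>
        p t z) :=
      (hp.of_le (by simp) : ContDiff ℝ 1 _).comp (contDiff_const.prodMk contDiff_id)
    exact this.differentiable one_ne_zero
  -- Euler identity
  have heuler : ∀ (t : ℝ) (z : EuclideanSpace ℝ (Fin n) × EuclideanSpace ℝ (Fin n)),
      fderiv ℝ (p t) z (0, z.2) = p t z := by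
    rintro t ⟨x, ξ⟩
    have hc : HasDerivAt (fun c : ℝ =>
        ((x, c • ξ) : EuclideanSpace ℝ (Fin n) × EuclideanSpace ℝ (Fin n))) (0, ξ) 1 := by
      refine (hasDerivAt_const 1 x).prodMk ?_
      simpa using (hasDerivAt_id (1:ℝ)).smul_const ξ
    have hpt : HasFDerivAt (p t) (fderiv ℝ (p t) (x, ξ)) (x, (1:ℝ) • ξ) := by
      rw [one_smul]; exact (hptd t (x, ξ)).hasFDerivAt
    have hd : HasDerivAt (fun c : ℝ => p t (x, c • ξ)) (fderiv ℝ (p t) (x, ξ) (0, ξ)) 1 :=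
      hpt.comp_hasDerivAt 1 hc
    have hEq : (fun c : ℝ => c * p t (x, ξ)) =ᶠ[nhds 1] fun c : ℝ => p t (x, c • ξ) := by
      filter_upwards [eventually_gt_nhds zero_lt_one] with c hc
      exact (hhom t x ξ c hc).symm
    have h2 : HasDerivAt (fun c : ℝ => c * p t (x, ξ)) (p t (x, ξ)) 1 := by
      simpa using (hasDerivAt_id (1:ℝ)).mul_const (p t (x, ξ))
    exact (hd.unique (h2.congr_of_eventuallyEq hEq.symm))
  -- α(H) = -p
  have hαH : ∀ (t : ℝ) (z : EuclideanSpace ℝ (Fin n) × EuclideanSpace ℝ (Fin n)),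
      ⟪z.2, (Ham t z).1⟫ = -(p t z) := by
    intro t z
    have h := hHam t z (0, z.2)
    rw [heuler t z] at h
    simp only [omegaCan, inner_zero_right] at h
    linarith [h]
  have halpha : ∀ t s, ⟪(Φ t s).2, (Φs t s).1⟫ = -1 := by
    intro t s
    rw [hflow t s, hαH t (Φ t s), hlevel t s]
  -- partial derivatives of P
  have hpartial_t : ∀ (t : ℝ) (z : EuclideanSpace ℝ (Fin n) × EuclideanSpace ℝ (Fin n)),
      fderiv ℝ (fun q : ℝ × (EuclideanSpace ℝ (Fin n) × EuclideanSpace ℝ (Fin n)) =>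
        p q.1 q.2) (t, z) (1, 0) = pdot t z := by
    intro t z
    have h1 : HasDerivAt (fun t' : ℝ => ((t', z) : ℝ ×
        (EuclideanSpace ℝ (Fin n) × EuclideanSpace ℝ (Fin n)))) (1, 0) t :=
      (hasDerivAt_id t).prodMk (hasDerivAt_const t z)
    exact ((hPd (t, z)).hasFDerivAt.comp_hasDerivAt (l := fun q : ℝ × (EuclideanSpace ℝ (Fin n) × EuclideanSpace ℝ (Fin n)) => p q.1 q.2) t h1).unique (hpdot t z)
  have hpartial_z : ∀ (t : ℝ) (z w : EuclideanSpace ℝ (Fin n) × EuclideanSpace ℝ (Fin n)),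
      fderiv ℝ (fun q : ℝ × (EuclideanSpace ℝ (Fin n) × EuclideanSpace ℝ (Fin n)) =>
        p q.1 q.2) (t, z) ((0:ℝ), w) = fderiv ℝ (p t) z w := by
    intro t z w
    have hmk : HasFDerivAt (fun y : EuclideanSpace ℝ (Fin n) × EuclideanSpace ℝ (Fin n) =>
        ((t, y) : ℝ × (EuclideanSpace ℝ (Fin n) × EuclideanSpace ℝ (Fin n))))
        (((0 : (EuclideanSpace ℝ (Fin n) × EuclideanSpace ℝ (Fin n)) →L[ℝ] ℝ)).prod
          (ContinuousLinearMap.id ℝ _)) z :=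
      (hasFDerivAt_const t z).prodMk (hasFDerivAt_id z)
    have hcomp := (hPd (t, z)).hasFDerivAt.comp z hmk
    have heq : fderiv ℝ (p t) z = ((fderiv ℝ (fun q : ℝ ×
        (EuclideanSpace ℝ (Fin n) × EuclideanSpace ℝ (Fin n)) => p q.1 q.2) (t, z)).comp
        (((0 : (EuclideanSpace ℝ (Fin n) × EuclideanSpace ℝ (Fin n)) →L[ℝ] ℝ)).prod
          (ContinuousLinearMap.id ℝ _))) := hcomp.fderiv
    rw [heq]
    simp
  -- Part 1
  have part1 : ∀ t s, omegaCan (Φt t s) (Φs t s) = pdot t (Φ t s) := by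
    intro t s
    have hchain : HasDerivAt (fun t' => p t' (Φ t' s))
        (fderiv ℝ (fun q : ℝ × (EuclideanSpace ℝ (Fin n) × EuclideanSpace ℝ (Fin n)) =>
          p q.1 q.2) (t, Φ t s) (1, Φt t s)) t :=
      (hPd (t, Φ t s)).hasFDerivAt.comp_hasDerivAt (l := fun q : ℝ × (EuclideanSpace ℝ (Fin n) × EuclideanSpace ℝ (Fin n)) => p q.1 q.2) t ((hasDerivAt_id t).prodMk (hΦt t s))
    have hconst : (fun t' => p t' (Φ t' s)) = fun _ : ℝ => (1:ℝ) :=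
      funext fun t' => hlevel t' s
    have hzero : fderiv ℝ (fun q : ℝ ×
        (EuclideanSpace ℝ (Fin n) × EuclideanSpace ℝ (Fin n)) => p q.1 q.2)
        (t, Φ t s) (1, Φt t s) = 0 :=
      (hconst ▸ hchain).unique (hasDerivAt_const t 1)
    have hsplit : ((1:ℝ), Φt t s) = (((1:ℝ),
        (0 : EuclideanSpace ℝ (Fin n) × EuclideanSpace ℝ (Fin n))))
        + ((0:ℝ), Φt t s) := by simp [Prod.ext_iff]
    rw [hsplit, map_add, hpartial_t, hpartial_z] at hzero
    have hω : fderiv ℝ (p t) (Φ t s) (Φt t s) = omegaCan (Φs t s) (Φt t s) := by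
      rw [hflow t s]; exact (hHam t (Φ t s) (Φt t s)).symm
    rw [hω] at hzero
    simp only [omegaCan] at *
    linarith [hzero]
  -- Periodicity of Φt
  have hΦtper : ∀ t s, Φt t (s + L) = Φt t s := by
    intro t s
    have he : (fun t' => Φ t' (s + L)) = fun t' => Φ t' s := funext fun t' => hper t' s
    exact (he ▸ hΦt t (s + L)).unique (hΦt t s)
  -- key lemma
  have key : ∀ t : ℝ, (∫ s in (0:ℝ)..L, pdot t (Φ t s)) = 0 := by
    intro t
    have hderiv : ∀ s : ℝ, HasDerivAt (fun s' => -⟪(Φ t s').2, (Φt t s').1⟫)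
        (pdot t (Φ t s)) s := by
      intro s
      have ha : HasDerivAt (fun s' => (Φ t s').2) ((Φs t s).2) s :=
        ((ContinuousLinearMap.snd ℝ (EuclideanSpace ℝ (Fin n))
          (EuclideanSpace ℝ (Fin n))).hasFDerivAt.comp_hasDerivAt s (hΦs t s))
      have hb : HasDerivAt (fun s' => (Φt t s').1)
          ((fderiv ℝ (fderiv ℝ (fun q : ℝ × ℝ => Φ q.1 q.2)) (t,s)
            ((1:ℝ),(0:ℝ)) ((0:ℝ),(1:ℝ))).1) s :=
        ((ContinuousLinearMap.fst ℝ (EuclideanSpace ℝ (Fin n))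
          (EuclideanSpace ℝ (Fin n))).hasFDerivAt.comp_hasDerivAt s (hΦtDs t s))
      have hinner : HasDerivAt (fun s' => -⟪(Φ t s').2, (Φt t s').1⟫) _ s :=
          (HasDerivAt.inner ℝ ha hb).neg
      have hg2 : HasDerivAt (fun t' => ⟪(Φ t' s).2, (Φs t' s).1⟫)
          (⟪(Φ t s).2, (fderiv ℝ (fderiv ℝ (fun q : ℝ × ℝ => Φ q.1 q.2)) (t,s)
              ((1:ℝ),(0:ℝ)) ((0:ℝ),(1:ℝ))).1⟫
            + ⟪(Φt t s).2, (Φs t s).1⟫) t := by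
        have ha' : HasDerivAt (fun t' => (Φ t' s).2) ((Φt t s).2) t :=
          ((ContinuousLinearMap.snd ℝ (EuclideanSpace ℝ (Fin n))
            (EuclideanSpace ℝ (Fin n))).hasFDerivAt.comp_hasDerivAt t (hΦt t s))
        have hb' : HasDerivAt (fun t' => (Φs t' s).1)
            ((fderiv ℝ (fderiv ℝ (fun q : ℝ × ℝ => Φ q.1 q.2)) (t,s)
              ((1:ℝ),(0:ℝ)) ((0:ℝ),(1:ℝ))).1) t :=
          ((ContinuousLinearMap.fst ℝ (EuclideanSpace ℝ (Fin n))
            (EuclideanSpace ℝ (Fin n))).hasFDerivAt.comp_hasDerivAt t (hΦsDt t s))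
        exact HasDerivAt.inner ℝ ha' hb'
      have hgconst : HasDerivAt (fun t' => ⟪(Φ t' s).2, (Φs t' s).1⟫) 0 t := by
        have he : (fun t' => ⟪(Φ t' s).2, (Φs t' s).1⟫) = fun _ : ℝ => (-1:ℝ) :=
          funext fun t' => halpha t' s
        rw [he]; exact hasDerivAt_const t (-1)
      have hid := hg2.unique hgconst
      convert hinner using 1
      have hp1 := part1 t s
      simp only [omegaCan] at hp1
      linarith [hid, hp1]
    have hcont : Continuous fun s => pdot t (Φ t s) := by
      have hPC : Continuous (fderiv ℝ (fun q : ℝ ×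
          (EuclideanSpace ℝ (Fin n) × EuclideanSpace ℝ (Fin n)) => p q.1 q.2)) :=
        ((hp.of_le (WithTop.coe_le_coe.mpr le_top) : ContDiff ℝ 2 _).fderiv_right (m := 1) (by norm_num)).continuous
      have h1 : Continuous fun s : ℝ => fderiv ℝ (fun q : ℝ ×
          (EuclideanSpace ℝ (Fin n) × EuclideanSpace ℝ (Fin n)) => p q.1 q.2)
          (t, Φ t s) (1, 0) :=
        (hPC.comp (continuous_const.prodMk
          (hΦ.continuous.comp (continuous_const.prodMk continuous_id)))).clm_apply
          continuous_const
      have he : (fun s => pdot t (Φ t s)) = fun s : ℝ => fderiv ℝ (fun q : ℝ ×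
          (EuclideanSpace ℝ (Fin n) × EuclideanSpace ℝ (Fin n)) => p q.1 q.2)
          (t, Φ t s) (1, 0) :=
        funext fun s => (hpartial_t t (Φ t s)).symm
      rw [he]; exact h1
    have hint : IntervalIntegrable (fun s => pdot t (Φ t s)) MeasureTheory.volume 0 L :=
      hcont.intervalIntegrable 0 L
    rw [intervalIntegral.integral_eq_sub_of_hasDerivAt (fun s _ => hderiv s) hint]
    have h0 : Φ t L = Φ t 0 := by simpa using hper t 0
    have h1 : Φt t L = Φt t 0 := by simpa using hΦtper t 0
    rw [h0, h1]
    ring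
  refine ⟨part1, ?_, key 0⟩
  have hRHS : ∀ t : ℝ, (∫ s in (0:ℝ)..L, alphaCan (Φ t s) (Φs t s)) = -L := by
    intro t
    have he : (fun s => alphaCan (Φ t s) (Φs t s)) = fun _ : ℝ => (-1:ℝ) :=
      funext fun s => halpha t s
    rw [he]
    simp
  rw [hRHS ε, hRHS 0]
  have he2 : (fun t => ∫ s in (0:ℝ)..L, pdot t (Φ t s)) = fun _ : ℝ => (0:ℝ) :=
    funext fun t => key t
  rw [he2]
  simp

end
end
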